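/- arXiv:1504.06461 — 4 statements merged into one kernel-verified Lean document; each statement's English description precedes it below -/
import Mathlib

section
/- Define ξ_c(α̂, α*, θ̃, τ, a) = cos(α̂ + a sin τ)·cos(α*)·cos(θ̃ + a cos τ) + sin(α̂ + a sin τ)·sin(α*). Then the average (1/(2π))∫₀^{2π} ξ_c dτ equals J0(√2 a)·cos(α*)·cos(α̂)·cos(θ̃) + J0(a)·sin(α*)·sin(α̂). -/
open Real

/-- Bessel function of the first kind of order 0 (integral representation). -/
noncomputable def J0 (x : ℝ) : ℝ := (1 / π) * ∫ t in (0:ℝ)..π, Real.cos (x * Real.sin t)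

/-!
Write `A = α̂ + a sin τ`, `B = θ̃ + a cos τ`. By product-to-sum, `cos A cos B` is the mean of
`cos (A ± B)`, and `A ± B = (α̂ ± θ̃) + √2 a sin (τ ± π/4)`. Every term of `ξ_c` is thus of the form
`cos (c + x sin (τ + s))` or `sin (c + x sin τ)`, whose mean over a period is `J0 x cos c`,
resp. `J0 x sin c`: the shift `s` is absorbed by periodicity, and `τ ↦ τ + π` flips the sign of
`sin τ`, so the half-periods pair up into `cos (c + y) + cos (c - y) = 2 cos c cos y`.
-/

open intervalIntegral

lemma integral_zero_two_mul_eq_integral_add_comp_add {f : ℝ → ℝ} (hf : Continuous f) (T : ℝ) :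
    ∫ τ in (0:ℝ)..2 * T, f τ = ∫ τ in (0:ℝ)..T, (f τ + f (τ + T)) := by
  have hshift : Continuous fun τ ↦ f (τ + T) := by fun_prop
  rw [integral_add (hf.intervalIntegrable _ _) (hshift.intervalIntegrable _ _),
    integral_comp_add_right f T, zero_add,
    integral_add_adjacent_intervals (hf.intervalIntegrable _ _) (hf.intervalIntegrable _ _),
    two_mul]

lemma integral_cos_add_mul_sin (c x : ℝ) :
    ∫ τ in (0:ℝ)..2 * π, cos (c + x * sin τ) = 2 * π * J0 x * cos c := by
  have hpair : ∀ τ, cos (c + x * sin τ) + cos (c + x * sin (τ + π)) =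
      2 * cos c * cos (x * sin τ) := by
    intro τ
    rw [sin_add_pi, mul_neg, ← sub_eq_add_neg, cos_add, cos_sub]
    ring
  rw [integral_zero_two_mul_eq_integral_add_comp_add (by fun_prop), funext hpair,
    integral_const_mul, J0]
  field_simp [pi_ne_zero]

lemma integral_sin_add_mul_sin (c x : ℝ) :
    ∫ τ in (0:ℝ)..2 * π, sin (c + x * sin τ) = 2 * π * J0 x * sin c := by
  simpa only [sub_add_eq_add_sub, cos_sub_pi_div_two] using
    integral_cos_add_mul_sin (c - π / 2) x

lemma integral_cos_add_mul_sin_add (c x s : ℝ) :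
    ∫ τ in (0:ℝ)..2 * π, cos (c + x * sin (τ + s)) = 2 * π * J0 x * cos c := by
  have hper : Function.Periodic (fun τ ↦ cos (c + x * sin τ)) (2 * π) := by
    intro τ
    simp only [sin_add_two_pi]
  rw [integral_comp_add_right (fun τ ↦ cos (c + x * sin τ)), zero_add, add_comm _ s,
    hper.intervalIntegral_add_eq s 0, zero_add, integral_cos_add_mul_sin]

lemma sqrt_two_mul_sin_add_pi_div_four (τ : ℝ) : √2 * sin (τ + π / 4) = sin τ + cos τ := by
  rw [sin_add, cos_pi_div_four, sin_pi_div_four]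
  linear_combination (sin τ + cos τ) / 2 * mul_self_sqrt (zero_le_two : (0:ℝ) ≤ 2)

lemma sqrt_two_mul_sin_sub_pi_div_four (τ : ℝ) : √2 * sin (τ - π / 4) = sin τ - cos τ := by
  rw [sin_sub, cos_pi_div_four, sin_pi_div_four]
  linear_combination (sin τ - cos τ) / 2 * mul_self_sqrt (zero_le_two : (0:ℝ) ≤ 2)

lemma cos_add_mul_sin_mul_cos_add_mul_cos (α θ a τ : ℝ) :
    cos (α + a * sin τ) * cos (θ + a * cos τ) =
      (cos (α + θ + √2 * a * sin (τ + π / 4)) + cos (α - θ + √2 * a * sin (τ - π / 4))) / 2 := by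
  have hplus : α + θ + √2 * a * sin (τ + π / 4) = (α + a * sin τ) + (θ + a * cos τ) := by
    linear_combination a * sqrt_two_mul_sin_add_pi_div_four τ
  have hminus : α - θ + √2 * a * sin (τ - π / 4) = (α + a * sin τ) - (θ + a * cos τ) := by
    linear_combination a * sqrt_two_mul_sin_sub_pi_div_four τ
  rw [hplus, hminus, cos_add (α + a * sin τ), cos_sub (α + a * sin τ)]
  ring

theorem xi_c_average (a αhat αstar θtilde : ℝ) :
    (1 / (2 * π)) * ∫ τ in (0:ℝ)..(2 * π),
        (Real.cos (αhat + a * Real.sin τ) * Real.cos αstar *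
            Real.cos (θtilde + a * Real.cos τ) +
          Real.sin (αhat + a * Real.sin τ) * Real.sin αstar)
      = J0 (Real.sqrt 2 * a) * Real.cos αstar * Real.cos αhat * Real.cos θtilde +
          J0 a * Real.sin αstar * Real.sin αhat := by
  have hminus : ∫ τ in (0:ℝ)..2 * π, cos (αhat - θtilde + √2 * a * sin (τ - π / 4)) =
      2 * π * J0 (√2 * a) * cos (αhat - θtilde) := by
    simpa only [← sub_eq_add_neg] using integral_cos_add_mul_sin_add _ (√2 * a) (-(π / 4))
  have hpoint : ∀ τ, cos (αhat + a * sin τ) * cos αstar * cos (θtilde + a * cos τ) +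
      sin (αhat + a * sin τ) * sin αstar =
        cos αstar / 2 * cos (αhat + θtilde + √2 * a * sin (τ + π / 4)) +
        cos αstar / 2 * cos (αhat - θtilde + √2 * a * sin (τ - π / 4)) +
        sin αstar * sin (αhat + a * sin τ) := by
    intro τ
    rw [mul_right_comm, cos_add_mul_sin_mul_cos_add_mul_cos]
    ring
  rw [funext hpoint, integral_add, integral_add, integral_const_mul, integral_const_mul,
    integral_const_mul, integral_cos_add_mul_sin_add, hminus, integral_sin_add_mul_sin, cos_add,
    cos_sub]
  · field_simp [pi_ne_zero]
    ring
  all_goals exact Continuous.intervalIntegrable (by fun_prop) _ _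
end

section
/- Suppose sin θ ≠ 0 and the equilibrium equations of the averaged system (with α* = α̂ = 0) hold: η/r = −b q R·[(J0(2√2 a)+J0(2a))·cos 2θ + J0(2a)+1]/(2 J0(√2 a) cos θ) and 0 = −√2 cθ q R r J1(√2 a) + (η/r)·J0(√2 a) + b q R (J0(2√2 a)+J0(2a))·cos θ, where η = Vc − b q r² − b e. Then r·cos θ = −ρ2 with ρ2 = √2·b·(1 − J0(2√2 a))/(4 cθ J1(√2 a)), assuming all denominators are nonzero. -/
/- Substituting the first equilibrium equation into the second and writing
`cos 2θ = 2 cos² θ - 1`, the `cos² θ` terms cancel and so does `J0 (2a)`; what is left is linear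
in `r cos θ`, with coefficient `√2 cθ q R J1 (√2 a)` against `b q R (J0 (2√2 a) - 1) / 2`. -/

open Real

/-- Bessel function of the first kind of order 1 (integral representation). -/
noncomputable def J1 (x : ℝ) : ℝ := (1 / π) * ∫ t in (0:ℝ)..π, Real.cos (t - x * Real.sin t)

theorem two_mul_mul_cos_eq_of_equilibrium {B K L J S x θ : ℝ} (hc : cos θ ≠ 0) (hJ : J ≠ 0)
    (h₁ : x = -(B * (K * cos (2 * θ) + L + 1)) / (2 * J * cos θ))
    (h₂ : 0 = -S + x * J + B * K * cos θ) :
    2 * S * cos θ = B * (K - L - 1) := by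
  rw [h₁, cos_two_mul] at h₂
  field_simp at h₂
  linear_combination h₂

theorem revolving_equilibrium_radius_general (b q R cθ a r θ : ℝ)
    (hq : 0 < q) (hR : 0 < R) (hcθ : 0 < cθ)
    (hcos : Real.cos θ ≠ 0)
    (hJ0 : J0 (Real.sqrt 2 * a) ≠ 0) (hJ1 : J1 (Real.sqrt 2 * a) ≠ 0)
    (η : ℝ)
    (heq1 : η / r =
      -(b * q * R *
          ((J0 (2 * Real.sqrt 2 * a) + J0 (2 * a)) * Real.cos (2 * θ) + J0 (2 * a) + 1)) /
        (2 * J0 (Real.sqrt 2 * a) * Real.cos θ))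
    (heq2 : 0 = -(Real.sqrt 2) * cθ * q * R * r * J1 (Real.sqrt 2 * a) +
      (η / r) * J0 (Real.sqrt 2 * a) +
      b * q * R * (J0 (2 * Real.sqrt 2 * a) + J0 (2 * a)) * Real.cos θ) :
    r * Real.cos θ =
      -(Real.sqrt 2 * b * (1 - J0 (2 * Real.sqrt 2 * a)) /
          (4 * cθ * J1 (Real.sqrt 2 * a))) := by
  have key := two_mul_mul_cos_eq_of_equilibrium
    (S := Real.sqrt 2 * cθ * q * R * r * J1 (Real.sqrt 2 * a)) hcos hJ0 heq1
    (by linear_combination heq2)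
  have hrc : 2 * Real.sqrt 2 * cθ * J1 (Real.sqrt 2 * a) * (r * Real.cos θ) =
      b * (J0 (2 * Real.sqrt 2 * a) - 1) :=
    mul_left_cancel₀ (mul_ne_zero hq.ne' hR.ne') (by linear_combination key)
  have hsqrt : Real.sqrt 2 * Real.sqrt 2 = 2 := mul_self_sqrt zero_le_two
  rw [← neg_div, eq_div_iff (mul_ne_zero (mul_ne_zero four_ne_zero hcθ.ne') hJ1)]
  linear_combination Real.sqrt 2 * hrc - 2 * cθ * J1 (Real.sqrt 2 * a) * (r * Real.cos θ) * hsqrt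

theorem revolving_equilibrium_radius (Vc b q R cθ a r θ e : ℝ)
    (hVc : 0 < Vc) (hb : 0 < b) (hq : 0 < q) (hR : 0 < R) (hcθ : 0 < cθ) (ha : 0 < a)
    (hr : 0 < r)
    (hsin : Real.sin θ ≠ 0) (hcos : Real.cos θ ≠ 0)
    (hJ0 : J0 (Real.sqrt 2 * a) ≠ 0) (hJ1 : J1 (Real.sqrt 2 * a) ≠ 0)
    (η : ℝ) (hη : η = Vc - b * q * r^2 - b * e)
    (heq1 : η / r =
      -(b * q * R *
          ((J0 (2 * Real.sqrt 2 * a) + J0 (2 * a)) * Real.cos (2 * θ) + J0 (2 * a) + 1)) /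
        (2 * J0 (Real.sqrt 2 * a) * Real.cos θ))
    (heq2 : 0 = -(Real.sqrt 2) * cθ * q * R * r * J1 (Real.sqrt 2 * a) +
      (η / r) * J0 (Real.sqrt 2 * a) +
      b * q * R * (J0 (2 * Real.sqrt 2 * a) + J0 (2 * a)) * Real.cos θ) :
    r * Real.cos θ =
      -(Real.sqrt 2 * b * (1 - J0 (2 * Real.sqrt 2 * a)) /
          (4 * cθ * J1 (Real.sqrt 2 * a))) :=
  revolving_equilibrium_radius_general b q R cθ a r θ hq hR hcθ hcos hJ0 hJ1 η heq1 heq2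
end

section
/- Using cos 2θ = 2cos²θ − 1, if r cos θ = −ρ2 and −η·J0(√2 a)·cos θ = (b q R r/2)·[(J0(2√2 a)+J0(2a))·cos 2θ + J0(2a)+1] with η determined so that r² = 2 γ3 ρ2², then cos θ = −√(1/(2γ3)), i.e., θ = ±arccos(−√(1/(2γ3))), provided γ3 ≥ 1/2. -/
open Real

lemma sq_eq_one_div_of_mul_eq_neg {r ρ c γ : ℝ} (hr : r ≠ 0) (hrc : r * c = -ρ)
    (hsq : r ^ 2 = 2 * γ * ρ ^ 2) : c ^ 2 = 1 / (2 * γ) := by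
  have hρ : ρ ≠ 0 := by
    rintro rfl
    exact hr (pow_eq_zero_iff two_ne_zero |>.mp (by simpa using hsq))
  have hc : c = -ρ / r := by rw [← hrc]; field_simp
  have hγ : 2 * γ = r ^ 2 / ρ ^ 2 := by rw [hsq]; field_simp
  rw [hc, hγ]
  field_simp

lemma eq_neg_sqrt_of_neg_of_sq_eq {c s : ℝ} (hc : c < 0) (h : c ^ 2 = s) : c = -√s := by
  rw [← h, Real.sqrt_sq_eq_abs, abs_of_neg hc, neg_neg]

theorem revolving_equilibrium_angle_general (r θ : ℝ)
    (hr : 0 < r)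
    (ρ2 γ3 : ℝ)
    (hρ2pos : 0 < ρ2)
    (hrcos : r * Real.cos θ = -ρ2)
    (hrsq : r^2 = 2 * γ3 * ρ2^2) :
    Real.cos θ = -Real.sqrt (1 / (2 * γ3)) := by
  have hcos_neg : Real.cos θ < 0 :=
    neg_of_mul_neg_right (hrcos ▸ neg_neg_of_pos hρ2pos) hr.le
  exact eq_neg_sqrt_of_neg_of_sq_eq hcos_neg (sq_eq_one_div_of_mul_eq_neg hr.ne' hrcos hrsq)

theorem revolving_equilibrium_angle (Vc b q R cθ a r θ e : ℝ)
    (hVc : 0 < Vc) (hb : 0 < b) (hq : 0 < q) (hR : 0 < R) (hcθ : 0 < cθ) (ha : 0 < a)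
    (hr : 0 < r)
    (ρ2 γ2 γ3 : ℝ)
    (hρ2def : ρ2 = Real.sqrt 2 * b * (1 - J0 (2 * Real.sqrt 2 * a)) /
        (4 * cθ * J1 (Real.sqrt 2 * a)))
    (hγ2def : γ2 = 2 * (J0 (Real.sqrt 2 * a))^2 +
        Vc * J0 (Real.sqrt 2 * a) / (b * q * R * ρ2))
    (hγ3def : γ3 = (J0 (2 * Real.sqrt 2 * a) + J0 (2 * a) - γ2) /
        (J0 (2 * Real.sqrt 2 * a) - 1))
    (hρ2pos : 0 < ρ2) (hγ3 : γ3 ≥ 1/2)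
    (η : ℝ) (hη : η = Vc - b * q * r^2 - b * e)
    (hrcos : r * Real.cos θ = -ρ2)
    (heq : -η * J0 (Real.sqrt 2 * a) * Real.cos θ =
      (b * q * R * r / 2) *
        ((J0 (2 * Real.sqrt 2 * a) + J0 (2 * a)) * Real.cos (2 * θ) + J0 (2 * a) + 1))
    (hrsq : r^2 = 2 * γ3 * ρ2^2) :
    Real.cos θ = -Real.sqrt (1 / (2 * γ3)) :=
  revolving_equilibrium_angle_general r θ hr ρ2 γ3 hρ2pos hrcos hrsq
end

section
/- For all a in the interval [1.75, 2.5]: J0(√2 a) < 0, J1(√2 a) > 0, 3J0(2a) − 2 < 0, and J0(2√2 a) + J0(2a) − 1 < 0. -/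
open Real

/-!
Every claim reduces to `J0 < 0` on `[2.46, 5]` and `J1 > 0` on `[2.46, 3.56]`: the last two
inequalities follow from `J0 (2 * a) < 0` and `J0 ≤ 1`. Both integrals are 1-Lipschitz in `x`.
Integrating the Taylor remainder of `exp (u * I)` (`Complex.exp_bound'`) against the Wallis
integrals `∫₀^π sin ^ (2k)` shows that `J0 x`, `J1 x` lie within `2 |x| ^ (2n) / (2n)!` of the
partial sums of their power series `∑ (-1)^k (x/2)^(2k) / k!²` and
`∑ (-1)^k (x/2)^(2k+1) / (k! (k+1)!)`. Covering each interval by finitely many subintervals and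
evaluating the partial sums at their midpoints finishes the proof.
-/

open Finset Nat

theorem abs_intervalAverage_sub_le {f g : ℝ → ℝ} {a b c : ℝ}
    (hf : IntervalIntegrable f MeasureTheory.volume a b)
    (hg : IntervalIntegrable g MeasureTheory.volume a b) (hfg : ∀ t, |f t - g t| ≤ c) :
    |(b - a)⁻¹ * (∫ t in a..b, f t) - (b - a)⁻¹ * ∫ t in a..b, g t| ≤ c := by
  have hc : 0 ≤ c := (abs_nonneg _).trans (hfg a)
  have hint : ‖∫ t in a..b, (f t - g t)‖ ≤ c * |b - a| :=
    intervalIntegral.norm_integral_le_of_norm_le_const fun t _ => hfg t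
  rw [← mul_sub, ← intervalIntegral.integral_sub hf hg, abs_mul, abs_inv]
  rcases eq_or_ne a b with rfl | hab
  · simpa using hc
  · rw [inv_mul_le_iff₀ (abs_pos.2 (sub_ne_zero.2 hab.symm)), mul_comm]
    exact hint

theorem forall_mem_Icc_append {P : ℝ → Prop} {a b c : ℝ} (hab : ∀ x ∈ Set.Icc a b, P x)
    (hbc : ∀ x ∈ Set.Icc b c, P x) : ∀ x ∈ Set.Icc a c, P x := fun x hx =>
  (le_total x b).elim (fun h => hab x ⟨hx.1, h⟩) fun h => hbc x ⟨h, hx.2⟩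

theorem abs_mul_sin_le (x t : ℝ) : |x * sin t| ≤ |x| := by
  rw [abs_mul]
  exact mul_le_of_le_one_right (abs_nonneg x) (abs_sin_le_one t)

theorem integral_comp_sin_mul_cos_eq_zero {g : ℝ → ℝ} (hg : Continuous g) :
    ∫ t in (0 : ℝ)..π, g (sin t) * cos t = 0 := by
  simpa using intervalIntegral.integral_comp_mul_deriv (a := 0) (b := π)
    (fun t _ => hasDerivAt_sin t) continuous_cos.continuousOn hg

theorem prod_range_wallis (k : ℕ) :
    ∏ i ∈ range k, (2 * (i : ℝ) + 1) / (2 * i + 2) =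
      (2 * k)! / (4 ^ k * (k ! : ℝ) ^ 2) := by
  induction k with
  | zero => simp
  | succ k ih =>
    rw [prod_range_succ, ih, Nat.mul_succ, Nat.factorial_succ, Nat.factorial_succ,
      Nat.factorial_succ]
    push_cast
    field_simp
    ring

noncomputable def cosTaylor (n : ℕ) (u : ℝ) : ℝ :=
  ∑ k ∈ range n, (-1) ^ k * u ^ (2 * k) / (2 * k)!

noncomputable def sinTaylor (n : ℕ) (u : ℝ) : ℝ :=
  ∑ k ∈ range n, (-1) ^ k * u ^ (2 * k + 1) / (2 * k + 1)!

theorem cosTaylor_add_sinTaylor_mul_I (n : ℕ) (u : ℝ) :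
    (cosTaylor n u : ℂ) + sinTaylor n u * Complex.I =
      ∑ m ∈ range (2 * n), ((u : ℂ) * Complex.I) ^ m / m ! := by
  induction n with
  | zero => simp [cosTaylor, sinTaylor]
  | succ n ih =>
    rw [Nat.mul_succ, sum_range_succ, sum_range_succ, ← ih]
    simp only [cosTaylor, sinTaylor, sum_range_succ]
    have hI : ((u : ℂ) * Complex.I) ^ (2 * n) = (-1) ^ n * u ^ (2 * n) := by
      rw [mul_pow, pow_mul Complex.I, Complex.I_sq, mul_comm]
    rw [pow_succ ((u : ℂ) * Complex.I), hI]
    push_cast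
    ring

theorem norm_cos_sub_cosTaylor_add_sin_sub_sinTaylor_le {n : ℕ} {u : ℝ} (hu : |u| ≤ n) :
    ‖((cos u - cosTaylor n u : ℝ) : ℂ) + (sin u - sinTaylor n u : ℝ) * Complex.I‖ ≤
      2 * |u| ^ (2 * n) / (2 * n)! := by
  have hnorm : ‖(u : ℂ) * Complex.I‖ = |u| := by simp
  have hbound := Complex.exp_bound' (x := u * Complex.I) (n := 2 * n) (by
    rw [hnorm, div_le_iff₀ (by positivity)]; push_cast; linarith)
  rw [← cosTaylor_add_sinTaylor_mul_I, Complex.exp_mul_I, hnorm] at hbound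
  convert hbound using 1
  · push_cast
    congr 1
    ring
  · ring

theorem abs_cos_sub_cosTaylor_le {n : ℕ} {u : ℝ} (hu : |u| ≤ n) :
    |cos u - cosTaylor n u| ≤ 2 * |u| ^ (2 * n) / (2 * n)! := by
  refine le_trans ?_ (norm_cos_sub_cosTaylor_add_sin_sub_sinTaylor_le hu)
  rw [Complex.norm_add_mul_I]
  exact Real.abs_le_sqrt (le_add_of_nonneg_right (sq_nonneg _))

theorem abs_cos_sub_sub_cosTaylor_sinTaylor_le {n : ℕ} {u : ℝ} (hu : |u| ≤ n) (t : ℝ) :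
    |cos (t - u) - (cos t * cosTaylor n u + sin t * sinTaylor n u)| ≤
      2 * |u| ^ (2 * n) / (2 * n)! := by
  refine le_trans ?_ (norm_cos_sub_cosTaylor_add_sin_sub_sinTaylor_le hu)
  rw [Complex.norm_add_mul_I, cos_sub]
  apply Real.abs_le_sqrt
  -- `(c α + s β)² + (c β - s α)² = (c² + s²) (α² + β²)`
  nlinarith [sq_nonneg (cos t * (sin u - sinTaylor n u) - sin t * (cos u - cosTaylor n u)),
    sin_sq_add_cos_sq t]

noncomputable def besselJ0Sum (n : ℕ) (x : ℝ) : ℝ :=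
  ∑ k ∈ range n, (-1) ^ k * (x / 2) ^ (2 * k) / (k ! : ℝ) ^ 2

noncomputable def besselJ1Sum (n : ℕ) (x : ℝ) : ℝ :=
  ∑ k ∈ range n, (-1) ^ k * (x / 2) ^ (2 * k + 1) / (k ! * (k + 1)! : ℝ)

theorem besselJ0Sum_eq_integral (n : ℕ) (x : ℝ) :
    besselJ0Sum n x = 1 / π * ∫ t in (0 : ℝ)..π, cosTaylor n (x * sin t) := by
  simp only [cosTaylor, mul_pow]
  rw [intervalIntegral.integral_finsetSum fun k _ => by
    apply Continuous.intervalIntegrable; fun_prop, mul_sum]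
  refine sum_congr rfl fun k _ => ?_
  simp only [mul_div_right_comm _ _ ((2 * k)! : ℝ), ← mul_assoc]
  rw [intervalIntegral.integral_const_mul, integral_sin_pow_even, prod_range_wallis, div_pow,
    show (4 : ℝ) = 2 ^ 2 by norm_num, ← pow_mul]
  field_simp

theorem besselJ1Sum_eq_integral (n : ℕ) (x : ℝ) :
    besselJ1Sum n x =
      1 / π * ∫ t in (0 : ℝ)..π,
        (cos t * cosTaylor n (x * sin t) + sin t * sinTaylor n (x * sin t)) := by
  have hcos : ∫ t in (0 : ℝ)..π, cos t * cosTaylor n (x * sin t) = 0 := by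
    simp only [mul_comm (cos _)]
    exact integral_comp_sin_mul_cos_eq_zero (g := fun s => cosTaylor n (x * s))
      (by unfold cosTaylor; fun_prop)
  rw [intervalIntegral.integral_add
    (by apply Continuous.intervalIntegrable; unfold cosTaylor; fun_prop)
    (by apply Continuous.intervalIntegrable; unfold sinTaylor; fun_prop), hcos, zero_add]
  simp only [sinTaylor, mul_sum, mul_pow]
  rw [intervalIntegral.integral_finsetSum fun k _ => by
    apply Continuous.intervalIntegrable; fun_prop, mul_sum]
  refine sum_congr rfl fun k _ => ?_
  have hpow (t : ℝ) :
      sin t * ((-1) ^ k * (x ^ (2 * k + 1) * sin t ^ (2 * k + 1)) / (2 * k + 1)!) =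
      (-1) ^ k * x ^ (2 * k + 1) / (2 * k + 1)! * sin t ^ (2 * (k + 1)) := by ring
  simp only [hpow]
  rw [intervalIntegral.integral_const_mul, integral_sin_pow_even, prod_range_wallis, div_pow,
    show (4 : ℝ) = 2 ^ 2 by norm_num, ← pow_mul, Nat.mul_succ, Nat.factorial_succ (2 * k + 1),
    Nat.factorial_succ k]
  push_cast
  field_simp
  ring

theorem abs_J0_sub_le (x y : ℝ) : |J0 x - J0 y| ≤ |x - y| := by
  have h := abs_intervalAverage_sub_le (a := 0) (b := π) (c := |x - y|)
    (f := fun t => cos (x * sin t)) (g := fun t => cos (y * sin t))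
    (by apply Continuous.intervalIntegrable; fun_prop)
    (by apply Continuous.intervalIntegrable; fun_prop) fun t => by
      refine (abs_cos_sub_cos_le _ _).trans ?_
      rw [← sub_mul]
      exact abs_mul_sin_le (x - y) t
  simpa only [J0, sub_zero, one_div] using h

theorem abs_J1_sub_le (x y : ℝ) : |J1 x - J1 y| ≤ |x - y| := by
  have h := abs_intervalAverage_sub_le (a := 0) (b := π) (c := |x - y|)
    (f := fun t => cos (t - x * sin t)) (g := fun t => cos (t - y * sin t))
    (by apply Continuous.intervalIntegrable; fun_prop)
    (by apply Continuous.intervalIntegrable; fun_prop) fun t => by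
      refine (abs_cos_sub_cos_le _ _).trans ?_
      rw [sub_sub_sub_cancel_left, ← sub_mul, abs_sub_comm x y]
      exact abs_mul_sin_le (y - x) t
  simpa only [J1, sub_zero, one_div] using h

theorem J0_le_one (x : ℝ) : J0 x ≤ 1 := by
  have h := abs_intervalAverage_sub_le (a := 0) (b := π) (c := 1)
    (f := fun t => cos (x * sin t)) (g := fun _ => 0)
    (by apply Continuous.intervalIntegrable; fun_prop) intervalIntegrable_const
    fun t => by simpa using abs_cos_le_one (x * sin t)
  simp only [intervalIntegral.integral_zero, mul_zero, sub_zero] at h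
  exact (le_abs_self _).trans (by simpa only [J0, one_div] using h)

theorem abs_J0_sub_besselJ0Sum_le {n : ℕ} {x : ℝ} (hx : |x| ≤ n) :
    |J0 x - besselJ0Sum n x| ≤ 2 * |x| ^ (2 * n) / (2 * n)! := by
  have h := abs_intervalAverage_sub_le (a := 0) (b := π) (c := 2 * |x| ^ (2 * n) / (2 * n)!)
    (f := fun t => cos (x * sin t)) (g := fun t => cosTaylor n (x * sin t))
    (by apply Continuous.intervalIntegrable; fun_prop)
    (by apply Continuous.intervalIntegrable; unfold cosTaylor; fun_prop) fun t =>
      (abs_cos_sub_cosTaylor_le ((abs_mul_sin_le x t).trans hx)).trans (by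
        gcongr 2 * ?_ ^ _ / _
        exact abs_mul_sin_le x t)
  simpa only [J0, besselJ0Sum_eq_integral, sub_zero, one_div] using h

theorem abs_J1_sub_besselJ1Sum_le {n : ℕ} {x : ℝ} (hx : |x| ≤ n) :
    |J1 x - besselJ1Sum n x| ≤ 2 * |x| ^ (2 * n) / (2 * n)! := by
  have h := abs_intervalAverage_sub_le (a := 0) (b := π) (c := 2 * |x| ^ (2 * n) / (2 * n)!)
    (f := fun t => cos (t - x * sin t))
    (g := fun t => cos t * cosTaylor n (x * sin t) + sin t * sinTaylor n (x * sin t))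
    (by apply Continuous.intervalIntegrable; fun_prop)
    (by apply Continuous.intervalIntegrable; unfold cosTaylor sinTaylor; fun_prop) fun t =>
      (abs_cos_sub_sub_cosTaylor_sinTaylor_le ((abs_mul_sin_le x t).trans hx) t).trans (by
        gcongr 2 * ?_ ^ _ / _
        exact abs_mul_sin_le x t)
  simpa only [J1, besselJ1Sum_eq_integral, sub_zero, one_div] using h

theorem J0_lt_of_mem_Icc {n : ℕ} {a b c x : ℝ} (hn : |(a + b) / 2| ≤ n)
    (hc : besselJ0Sum n ((a + b) / 2) + 2 * |(a + b) / 2| ^ (2 * n) / (2 * n)! + (b - a) / 2 < c)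
    (hx : x ∈ Set.Icc a b) : J0 x < c := by
  have hlip := abs_J0_sub_le x ((a + b) / 2)
  have hsum := abs_J0_sub_besselJ0Sum_le hn
  have hdist : |x - (a + b) / 2| ≤ (b - a) / 2 :=
    abs_sub_le_iff.2 ⟨by linarith [hx.2], by linarith [hx.1]⟩
  linarith [le_abs_self (J0 x - J0 ((a + b) / 2)),
    le_abs_self (J0 ((a + b) / 2) - besselJ0Sum n ((a + b) / 2))]

theorem lt_J1_of_mem_Icc {n : ℕ} {a b c x : ℝ} (hn : |(a + b) / 2| ≤ n)
    (hc : c < besselJ1Sum n ((a + b) / 2) - 2 * |(a + b) / 2| ^ (2 * n) / (2 * n)! - (b - a) / 2)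
    (hx : x ∈ Set.Icc a b) : c < J1 x := by
  have hlip := abs_J1_sub_le x ((a + b) / 2)
  have hsum := abs_J1_sub_besselJ1Sum_le hn
  have hdist : |x - (a + b) / 2| ≤ (b - a) / 2 :=
    abs_sub_le_iff.2 ⟨by linarith [hx.2], by linarith [hx.1]⟩
  linarith [neg_abs_le (J1 x - J1 ((a + b) / 2)),
    neg_abs_le (J1 ((a + b) / 2) - besselJ1Sum n ((a + b) / 2))]

-- Breakpoints chosen so that every midpoint estimate holds with a margin of about `0.003`.
theorem J0_neg_of_mem_Icc : ∀ x ∈ Set.Icc (2.46 : ℝ) 5, J0 x < 0 := by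
  refine forall_mem_Icc_append (b := 2.56) ?_ <| forall_mem_Icc_append (b := 2.83) ?_ <|
    forall_mem_Icc_append (b := 3.42) ?_ <| forall_mem_Icc_append (b := 4.2) ?_ <|
    forall_mem_Icc_append (b := 4.8) ?_ ?_
  all_goals
    intro x hx
    refine J0_lt_of_mem_Icc (n := 12) ?_ ?_ hx <;>
      norm_num [abs_of_pos, besselJ0Sum, sum_range_succ, Nat.factorial]

theorem J1_pos_of_mem_Icc : ∀ x ∈ Set.Icc (2.46 : ℝ) 3.56, 0 < J1 x := by
  refine forall_mem_Icc_append (b := 3.2) ?_ ?_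
  all_goals
    intro x hx
    refine lt_J1_of_mem_Icc (n := 12) ?_ ?_ hx <;>
      norm_num [abs_of_pos, besselJ1Sum, sum_range_succ, Nat.factorial]

theorem bessel_signs_Sa2 :
    ∀ a ∈ Set.Icc (1.75 : ℝ) 2.5,
      J0 (Real.sqrt 2 * a) < 0 ∧
      0 < J1 (Real.sqrt 2 * a) ∧
      3 * J0 (2 * a) - 2 < 0 ∧
      J0 (2 * Real.sqrt 2 * a) + J0 (2 * a) - 1 < 0 := by
  rintro a ⟨ha₁, ha₂⟩
  have hsqrt₁ : (1.41 : ℝ) < √2 := Real.lt_sqrt_of_sq_lt (by norm_num)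
  have hsqrt₂ : √2 < 1.42 := (Real.sqrt_lt' (by norm_num)).2 (by norm_num)
  have hJ0 : J0 (√2 * a) < 0 := J0_neg_of_mem_Icc _ ⟨by nlinarith, by nlinarith⟩
  have hJ1 : 0 < J1 (√2 * a) := J1_pos_of_mem_Icc _ ⟨by nlinarith, by nlinarith⟩
  have hJ0_two : J0 (2 * a) < 0 := J0_neg_of_mem_Icc _ ⟨by linarith, by linarith⟩
  exact ⟨hJ0, hJ1, by linarith, by linarith [J0_le_one (2 * √2 * a)]⟩
end
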